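/- arXiv:1810.12179 — 2 statements merged into one kernel-verified Lean document; each statement's English description precedes it below -/
import Mathlib

section
/- Let G^N be the group of characters of the truncated Hopf algebra H_N with the homogeneous norm |X| = max_{k≤N}(k!⟪X_k⟫)^{1/k} + max_{k≤N}(k!⟪X_k^{-1}⟫)^{1/k}, where X_k is the restriction of X to H_{(k)} and ⟪·⟫ is a submultiplicative norm on H_N*. Then this norm is sub-additive: |X ⋆ Y| ≤ |X| + |Y| for all X, Y ∈ G^N. -/
/-!
Write `a_A = max_{1≤k≤N} (k! ⟪A_k⟫)^{1/k}`, so that `k! ⟪A_k⟫ ≤ a_A^k`. Since `A_0 = B_0 = ε` is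
the unit of convolution, submultiplicativity gives `k! ⟪A_j ⋆ B_{k-j}⟫ ≤ (k choose j) a_A^j a_B^{k-j}`
for every `j ≤ k`, and the binomial theorem sums these to `k! ⟪(A ⋆ B)_k⟫ ≤ (a_A + a_B)^k`.
Hence `a_{A⋆B} ≤ a_A + a_B`; applied to `X ⋆ Y` and to `Y⁻¹ ⋆ X⁻¹` this is the claim.
-/

open TensorProduct

variable {H : Type*} [Ring H] [Bialgebra ℝ H]

/-- Convolution product on the full linear dual of a coalgebra. -/
noncomputable def conv (f g : Module.Dual ℝ H) : Module.Dual ℝ H :=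
  (TensorProduct.lid ℝ ℝ).toLinearMap ∘ₗ TensorProduct.map f g ∘ₗ Coalgebra.comul

/-- The homogeneous norm `|X| = max_{1≤k≤N}(k!⟪X_k⟫)^{1/k} + max_{1≤k≤N}(k!⟪X_k⁻¹⟫)^{1/k}`,
given through the homogeneous components of `X` and of its convolution inverse. -/
noncomputable def homn (N : ℕ) (hN : 1 ≤ N) (nrm : Module.Dual ℝ H → ℝ)
    (Ac Aic : ℕ → Module.Dual ℝ H) : ℝ :=
  Finset.sup' (Finset.Icc 1 N) (Finset.nonempty_Icc.2 hN)
    (fun k => (((Nat.factorial k : ℝ)) * nrm (Ac k)) ^ ((k : ℝ)⁻¹)) +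
  Finset.sup' (Finset.Icc 1 N) (Finset.nonempty_Icc.2 hN)
    (fun k => (((Nat.factorial k : ℝ)) * nrm (Aic k)) ^ ((k : ℝ)⁻¹))

open Finset
open scoped Nat

theorem conv_counit_left (f : Module.Dual ℝ H) : conv Coalgebra.counit f = f := by
  ext x
  simp only [conv, LinearMap.comp_apply, LinearEquiv.coe_coe]
  rw [← LinearMap.lTensor_comp_rTensor, LinearMap.comp_apply, Coalgebra.rTensor_counit_comul]
  simp

theorem conv_counit_right (f : Module.Dual ℝ H) : conv f Coalgebra.counit = f := by
  ext x
  simp only [conv, LinearMap.comp_apply, LinearEquiv.coe_coe]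
  rw [← LinearMap.rTensor_comp_lTensor, LinearMap.comp_apply, Coalgebra.lTensor_counit_comul]
  simp

theorem Real.rpow_natCast_inv_le_iff {x y : ℝ} {k : ℕ} (hx : 0 ≤ x) (hy : 0 ≤ y) (hk : k ≠ 0) :
    x ^ (k⁻¹ : ℝ) ≤ y ↔ x ≤ y ^ k := by
  rw [Real.rpow_inv_le_iff_of_pos hx hy (by positivity), Real.rpow_natCast]

section ConvolutionEstimate

variable {nrm : Module.Dual ℝ H → ℝ} {A B : ℕ → Module.Dual ℝ H} {a b : ℝ} {k : ℕ}

theorem factorial_mul_nrm_conv_le (hnn : ∀ f, 0 ≤ nrm f)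
    (hsub : ∀ f g, nrm (conv f g) ≤ nrm f * nrm g)
    (hA0 : A 0 = Coalgebra.counit) (hB0 : B 0 = Coalgebra.counit) (ha : 0 ≤ a)
    (hA : ∀ j, 1 ≤ j → j ≤ k → j ! * nrm (A j) ≤ a ^ j)
    (hB : ∀ j, 1 ≤ j → j ≤ k → j ! * nrm (B j) ≤ b ^ j) (hk : 1 ≤ k) {j : ℕ} (hj : j ≤ k) :
    k ! * nrm (conv (A j) (B (k - j))) ≤ a ^ j * b ^ (k - j) * k.choose j := by
  rcases Nat.eq_zero_or_pos j with rfl | hj0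
  · simpa [hA0, conv_counit_left] using hB k hk le_rfl
  rcases hj.eq_or_lt with rfl | hjk
  · simpa [hB0, conv_counit_right] using hA j hj0 le_rfl
  have hfact : (k ! : ℝ) = k.choose j * j ! * (k - j)! := by
    exact_mod_cast (Nat.choose_mul_factorial_mul_factorial hj).symm
  calc (k ! : ℝ) * nrm (conv (A j) (B (k - j)))
      ≤ k ! * (nrm (A j) * nrm (B (k - j))) := by gcongr; exact hsub _ _
    _ = (j ! * nrm (A j)) * ((k - j)! * nrm (B (k - j))) * k.choose j := by rw [hfact]; ring
    _ ≤ a ^ j * b ^ (k - j) * k.choose j := by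
        gcongr
        · exact mul_nonneg (by positivity) (hnn _)
        · exact hA j hj0 hj
        · exact hB (k - j) (by omega) (by omega)

theorem factorial_mul_nrm_convSum_le (hnn : ∀ f, 0 ≤ nrm f)
    (htri : ∀ f g, nrm (f + g) ≤ nrm f + nrm g)
    (hsub : ∀ f g, nrm (conv f g) ≤ nrm f * nrm g)
    (hA0 : A 0 = Coalgebra.counit) (hB0 : B 0 = Coalgebra.counit) (ha : 0 ≤ a)
    (hA : ∀ j, 1 ≤ j → j ≤ k → j ! * nrm (A j) ≤ a ^ j)
    (hB : ∀ j, 1 ≤ j → j ≤ k → j ! * nrm (B j) ≤ b ^ j) (hk : 1 ≤ k) :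
    k ! * nrm (∑ j ∈ range (k + 1), conv (A j) (B (k - j))) ≤ (a + b) ^ k := by
  calc (k ! : ℝ) * nrm (∑ j ∈ range (k + 1), conv (A j) (B (k - j)))
      ≤ k ! * ∑ j ∈ range (k + 1), nrm (conv (A j) (B (k - j))) := by
        gcongr
        exact le_sum_nonempty_of_subadditive nrm htri nonempty_range_add_one _
    _ = ∑ j ∈ range (k + 1), k ! * nrm (conv (A j) (B (k - j))) := mul_sum _ _ _
    _ ≤ ∑ j ∈ range (k + 1), a ^ j * b ^ (k - j) * k.choose j :=
        sum_le_sum fun j hj =>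
          factorial_mul_nrm_conv_le hnn hsub hA0 hB0 ha hA hB hk (mem_range_succ_iff.mp hj)
    _ = (a + b) ^ k := (add_pow a b k).symm

end ConvolutionEstimate

noncomputable def homnSup (N : ℕ) (hN : 1 ≤ N) (nrm : Module.Dual ℝ H → ℝ)
    (A : ℕ → Module.Dual ℝ H) : ℝ :=
  (Icc 1 N).sup' (nonempty_Icc.2 hN) fun k => ((k ! : ℝ) * nrm (A k)) ^ (k⁻¹ : ℝ)

section HomnSup

variable {N : ℕ} {hN : 1 ≤ N} {nrm : Module.Dual ℝ H → ℝ}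

theorem homn_eq_homnSup_add (Ac Aic : ℕ → Module.Dual ℝ H) :
    homn N hN nrm Ac Aic = homnSup N hN nrm Ac + homnSup N hN nrm Aic :=
  rfl

theorem homnSup_nonneg (hnn : ∀ f, 0 ≤ nrm f) (A : ℕ → Module.Dual ℝ H) :
    0 ≤ homnSup N hN nrm A :=
  (Real.rpow_nonneg (mul_nonneg (by positivity) (hnn _)) _).trans
    (le_sup' (fun k => ((k ! : ℝ) * nrm (A k)) ^ (k⁻¹ : ℝ)) (mem_Icc.2 ⟨le_rfl, hN⟩))

theorem factorial_mul_nrm_le_homnSup_pow (hnn : ∀ f, 0 ≤ nrm f) (A : ℕ → Module.Dual ℝ H)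
    {k : ℕ} (hk : 1 ≤ k) (hkN : k ≤ N) : k ! * nrm (A k) ≤ homnSup N hN nrm A ^ k :=
  (Real.rpow_natCast_inv_le_iff (mul_nonneg (by positivity) (hnn _)) (homnSup_nonneg hnn A)
    (by omega)).1 (le_sup' (fun k => ((k ! : ℝ) * nrm (A k)) ^ (k⁻¹ : ℝ)) (mem_Icc.2 ⟨hk, hkN⟩))

theorem homnSup_convSum_le (hnn : ∀ f, 0 ≤ nrm f)
    (htri : ∀ f g, nrm (f + g) ≤ nrm f + nrm g)
    (hsub : ∀ f g, nrm (conv f g) ≤ nrm f * nrm g)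
    {A B : ℕ → Module.Dual ℝ H} (hA0 : A 0 = Coalgebra.counit) (hB0 : B 0 = Coalgebra.counit) :
    homnSup N hN nrm (fun k => ∑ j ∈ range (k + 1), conv (A j) (B (k - j))) ≤
      homnSup N hN nrm A + homnSup N hN nrm B := by
  have ha := homnSup_nonneg (hN := hN) hnn A
  have hb := homnSup_nonneg (hN := hN) hnn B
  refine sup'_le _ _ fun k hk => ?_
  obtain ⟨hk1, hkN⟩ := mem_Icc.1 hk
  refine (Real.rpow_natCast_inv_le_iff (mul_nonneg (by positivity) (hnn _)) (add_nonneg ha hb)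
    (by omega)).2 ?_
  exact factorial_mul_nrm_convSum_le hnn htri hsub hA0 hB0 ha
    (fun j hj hjk => factorial_mul_nrm_le_homnSup_pow hnn A hj (hjk.trans hkN))
    (fun j hj hjk => factorial_mul_nrm_le_homnSup_pow hnn B hj (hjk.trans hkN)) hk1

end HomnSup

theorem homogeneous_norm_subadditive_general
    (N : ℕ) (hN : 1 ≤ N)
    (nrm : Module.Dual ℝ H → ℝ)
    (hnn : ∀ f, 0 ≤ nrm f)
    (htri : ∀ f g, nrm (f + g) ≤ nrm f + nrm g)
    (hsub : ∀ f g, nrm (conv f g) ≤ nrm f * nrm g)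
    (Xc Yc Xic Yic : ℕ → Module.Dual ℝ H)
    (hXc0 : Xc 0 = Coalgebra.counit) (hYc0 : Yc 0 = Coalgebra.counit)
    (hXic0 : Xic 0 = Coalgebra.counit) (hYic0 : Yic 0 = Coalgebra.counit) :
    homn N hN nrm
        (fun k => ∑ j ∈ Finset.range (k + 1), conv (Xc j) (Yc (k - j)))
        (fun k => ∑ j ∈ Finset.range (k + 1), conv (Yic j) (Xic (k - j))) ≤
      homn N hN nrm Xc Xic + homn N hN nrm Yc Yic := by
  simp only [homn_eq_homnSup_add]
  have hprod := homnSup_convSum_le (hN := hN) hnn htri hsub hXc0 hYc0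
  have hinv := homnSup_convSum_le (hN := hN) hnn htri hsub hYic0 hXic0
  linarith

/-- The homogeneous norm on the character group `G^N` of a truncated graded Hopf
algebra is sub-additive: `|X ⋆ Y| ≤ |X| + |Y|`, where the degree-`k` component of
`X ⋆ Y` is `Σ_j X_j ⋆ Y_{k-j}` and its inverse is `Y⁻¹ ⋆ X⁻¹`. -/
theorem homogeneous_norm_subadditive
    (ℋ : ℕ → Submodule ℝ H)
    (hcomul : ∀ n : ℕ, Submodule.map (Coalgebra.comul (R := ℝ) (A := H)) (ℋ n) ≤
      ⨆ p ∈ Finset.range (n + 1),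
        Submodule.map₂ (TensorProduct.mk ℝ H H) (ℋ p) (ℋ (n - p)))
    (N : ℕ) (hN : 1 ≤ N)
    (nrm : Module.Dual ℝ H → ℝ)
    (hnn : ∀ f, 0 ≤ nrm f)
    (htri : ∀ f g, nrm (f + g) ≤ nrm f + nrm g)
    (hsub : ∀ f g, nrm (conv f g) ≤ nrm f * nrm g)
    (X Y Xi Yi : Module.Dual ℝ H)
    (Xc Yc Xic Yic : ℕ → Module.Dual ℝ H)
    (hXc0 : Xc 0 = Coalgebra.counit) (hYc0 : Yc 0 = Coalgebra.counit)
    (hXic0 : Xic 0 = Coalgebra.counit) (hYic0 : Yic 0 = Coalgebra.counit)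
    (hXc : ∀ k n, n ≠ k → ∀ x ∈ ℋ n, Xc k x = 0)
    (hYc : ∀ k n, n ≠ k → ∀ x ∈ ℋ n, Yc k x = 0)
    (hXic : ∀ k n, n ≠ k → ∀ x ∈ ℋ n, Xic k x = 0)
    (hYic : ∀ k n, n ≠ k → ∀ x ∈ ℋ n, Yic k x = 0)
    (hX : X = ∑ k ∈ Finset.range (N + 1), Xc k)
    (hY : Y = ∑ k ∈ Finset.range (N + 1), Yc k)
    (hXi : Xi = ∑ k ∈ Finset.range (N + 1), Xic k)
    (hYi : Yi = ∑ k ∈ Finset.range (N + 1), Yic k)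
    -- `X, Y` are characters and `Xi, Yi` their convolution inverses on `H_N`:
    (hXchar : ∀ a b : H, X (a * b) = X a * X b) (hX1 : X 1 = 1)
    (hYchar : ∀ a b : H, Y (a * b) = Y a * Y b) (hY1 : Y 1 = 1)
    (hXinv : ∀ x ∈ (⨆ k ∈ Finset.range (N + 1), ℋ k),
      conv X Xi x = Coalgebra.counit (R := ℝ) x ∧ conv Xi X x = Coalgebra.counit (R := ℝ) x)
    (hYinv : ∀ x ∈ (⨆ k ∈ Finset.range (N + 1), ℋ k),
      conv Y Yi x = Coalgebra.counit (R := ℝ) x ∧ conv Yi Y x = Coalgebra.counit (R := ℝ) x) :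
    homn N hN nrm
        (fun k => ∑ j ∈ Finset.range (k + 1), conv (Xc j) (Yc (k - j)))
        (fun k => ∑ j ∈ Finset.range (k + 1), conv (Yic j) (Xic (k - j))) ≤
      homn N hN nrm Xc Xic + homn N hN nrm Yc Yic :=
  homogeneous_norm_subadditive_general N hN nrm hnn htri hsub Xc Yc Xic Yic hXc0 hYc0 hXic0 hYic0
end

section
/- Let F be a finite rooted forest and o : N_F → ℕ an admissible extended decoration, i.e. o(N_F) is an interval of integers containing 1, o is increasing with respect to the tree partial order, and for each j the set O_j = {x : o(x) = j} spans a subtree T_j of F. Then for each j, the boundary ∂_F T_j = {edges e : s(e) ∈ N_{T_j}, t(e) ∉ N_{T_j}} is an admissible cut of F: every path from a root of F to any node contains at most one edge of ∂_F T_j. -/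
/-! Along a root-to-node path the decoration `o` is monotone, so once the path leaves the level
`o = j` through a boundary edge it never returns to it and cannot cross a second boundary edge of
that level. Since the boundary edges on such a path have comparable targets, they coincide. -/

/-- `anc parent x y` : `x` is an ancestor of `y` (the path from the root to `y`
passes through `x`) in the rooted forest with parent map `parent`; edges are
oriented away from the roots. -/
def anc {V : Type*} (parent : V → Option V) (x y : V) : Prop :=
  Relation.ReflTransGen (fun a b => parent b = some a) x y

open Relation

lemma anc_total_of_anc {V : Type*} {parent : V → Option V} {a b x : V}
    (ha : anc parent a x) (hb : anc parent b x) : anc parent a b ∨ anc parent b a := by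
  have hunique : Relator.RightUnique (flip fun a b => parent b = some a) :=
    fun _ _ _ h₁ h₂ => Option.some_injective _ (h₁.symm.trans h₂)
  exact (ReflTransGen.total_of_right_unique hunique (reflTransGen_swap.2 ha)
    (reflTransGen_swap.2 hb)).symm.imp reflTransGen_swap.1 reflTransGen_swap.1

lemma eq_of_anc_of_boundary_edge {V : Type*} {parent : V → Option V} {o : V → ℕ}
    (hmono : ∀ x y, anc parent x y → o x ≤ o y) {j : ℕ} {p c p' c' : V}
    (hc : parent c = some p) (hc' : parent c' = some p') (hp : o p = j) (hcj : o c ≠ j)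
    (hp' : o p' = j) (hcc' : anc parent c c') : c = c' := by
  rcases ReflTransGen.cases_tail hcc' with rfl | ⟨b, hcb, hbc'⟩
  · rfl
  · obtain rfl : b = p' := Option.some_injective _ (hbc'.symm.trans hc')
    have hle : o c ≤ j := hp' ▸ hmono _ _ hcb
    have hge : j ≤ o c := hp ▸ hmono _ _ (ReflTransGen.single hc)
    exact absurd (le_antisymm hle hge) hcj

theorem boundary_of_level_subtree_is_admissible_cut_general
    {V : Type*} (parent : V → Option V) (o : V → ℕ)
    (hmono : ∀ x y, anc parent x y → o x ≤ o y) :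
    ∀ (j : ℕ) (x p₁ c₁ p₂ c₂ : V),
      parent c₁ = some p₁ → parent c₂ = some p₂ →
      o p₁ = j → o c₁ ≠ j → o p₂ = j → o c₂ ≠ j →
      anc parent c₁ x → anc parent c₂ x → c₁ = c₂ := by
  intro j x p₁ c₁ p₂ c₂ hc₁ hc₂ hp₁ hcj₁ hp₂ hcj₂ hx₁ hx₂
  rcases anc_total_of_anc hx₁ hx₂ with h | h
  · exact eq_of_anc_of_boundary_edge hmono hc₁ hc₂ hp₁ hcj₁ hp₂ h
  · exact (eq_of_anc_of_boundary_edge hmono hc₂ hc₁ hp₂ hcj₂ hp₁ h).symm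

/-- For an admissible extended decoration `o` on a rooted forest, the boundary
`∂_F T_j` of the subtree spanned by a level set `O_j = {x : o x = j}` is an
admissible cut: every path from a root to a node contains at most one boundary
edge (an edge `(p, c)` with `o p = j` and `o c ≠ j`). -/
theorem boundary_of_level_subtree_is_admissible_cut
    {V : Type*} (parent : V → Option V) (o : V → ℕ)
    (hacyc : ∀ x y, anc parent x y → anc parent y x → x = y)
    (hpos : ∀ x, 1 ≤ o x)
    (hone : ∃ x, o x = 1)
    (hinterval : ∀ j, (∃ x, o x = j) → ∀ i, 1 ≤ i → i ≤ j → ∃ y, o y = i)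
    (hmono : ∀ x y, anc parent x y → o x ≤ o y)
    (hsubtree : ∀ j, (∃ x, o x = j) → ∃ r, o r = j ∧
      (∀ x, o x = j → anc parent r x) ∧
      (∀ x z, o x = j → anc parent r z → anc parent z x → o z = j)) :
    ∀ (j : ℕ) (x p₁ c₁ p₂ c₂ : V),
      parent c₁ = some p₁ → parent c₂ = some p₂ →
      o p₁ = j → o c₁ ≠ j → o p₂ = j → o c₂ ≠ j →
      anc parent c₁ x → anc parent c₂ x → c₁ = c₂ :=
  boundary_of_level_subtree_is_admissible_cut_general parent o hmono
end
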